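/- arXiv:2109.02863 — 2 statements merged into one kernel-verified Lean document; each statement's English description precedes it below -/
import Mathlib

section
/- Under Assumption 1 (A = V + N with V r-separable, all columns of V, W, H having unit L1 norm, and ||N||_1 ≤ ε < 1), the optimal value θ of the optimization problem P(A,r): minimize ||A − AX||_1 subject to tr(X) = r, X(i,i) ≤ 1 for all i, 0 ≤ X(i,j) ≤ X(i,i) for all i,j, satisfies θ ≤ 2ε. -/
noncomputable section
open Matrix
open scoped Classical

/-- Entrywise L1 norm of a vector. -/
def l1 {α : Type*} [Fintype α] (v : α → ℝ) : ℝ := ∑ i, |v i|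

/-- Induced L1 norm of a matrix (maximum column sum of absolute values). -/
def ml1 {α β : Type*} [Fintype α] [Fintype β] (M : Matrix α β ℝ) : ℝ :=
  sSup (Set.range fun j => ∑ i, |M i j|)

/-- Feasible set of problem P(A,r). -/
def Feas {ι : Type*} [Fintype ι] [DecidableEq ι] (X : Matrix ι ι ℝ) (r : ℕ) : Prop :=
  Matrix.trace X = (r : ℝ) ∧ (∀ i, X i i ≤ 1) ∧ (∀ i j, 0 ≤ X i j) ∧
    (∀ i j, X i j ≤ X i i)

/-- κ(W) = min over j of min over nonnegative z (supported off j) of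
    ‖w_j − W(:,R∖{j}) z‖₁. -/
def kappa {d r : ℕ} (W : Matrix (Fin d) (Fin r) ℝ) : ℝ :=
  sInf {c | ∃ (j : Fin r) (z : Fin r → ℝ), (∀ k, 0 ≤ z k) ∧ z j = 0 ∧
    c = l1 (fun i => W i j - ∑ k, W i k * z k)}

/-- ω(W) = min over distinct pairs of ‖w_{j₁} − w_{j₂}‖₁. -/
def omegaW {d r : ℕ} (W : Matrix (Fin d) (Fin r) ℝ) : ℝ :=
  sInf {c | ∃ j₁ j₂ : Fin r, j₁ ≠ j₂ ∧ c = l1 (fun i => W i j₁ - W i j₂)}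

/-- β = maximum entry of H̄. -/
def betaH {r m : ℕ} (Hb : Matrix (Fin r) (Fin m) ℝ) : ℝ :=
  sSup (Set.range fun p : Fin r × Fin m => Hb p.1 p.2)

/-! Separability supplies a feasible point. The pure columns of `A` are `𝒦 = σ⁻¹(inl _)`, and
`H(:,𝒦) = I`. Let `X₀` carry `H` in the rows indexed by `𝒦` and vanish elsewhere: it is
feasible with trace `r`, and `A X₀ = A(:,𝒦) H = (W + N(:,𝒦)) H = V + N(:,𝒦) H`. Hence
`A - A X₀ = N - N(:,𝒦) H`, whose induced L1 norm is at most `‖N‖₁ + ‖N‖₁ ‖H‖₁ ≤ 2ε`. -/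

section InducedL1Norm

variable {α β γ : Type*} [Fintype α] [Fintype β] [Fintype γ]

lemma sum_abs_le_ml1 (M : Matrix α β ℝ) (j : β) : ∑ i, |M i j| ≤ ml1 M :=
  le_csSup (Set.finite_range _).bddAbove ⟨j, rfl⟩

lemma ml1_le {M : Matrix α β ℝ} {c : ℝ} (hc : 0 ≤ c) (h : ∀ j, ∑ i, |M i j| ≤ c) :
    ml1 M ≤ c :=
  Real.sSup_le (by rintro _ ⟨j, rfl⟩; exact h j) hc

lemma ml1_nonneg (M : Matrix α β ℝ) : 0 ≤ ml1 M :=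
  Real.sSup_nonneg (by rintro _ ⟨j, rfl⟩; positivity)

lemma ml1_sub_le (M N : Matrix α β ℝ) : ml1 (M - N) ≤ ml1 M + ml1 N :=
  ml1_le (add_nonneg (ml1_nonneg M) (ml1_nonneg N)) fun j =>
    calc ∑ i, |(M - N) i j| ≤ ∑ i, (|M i j| + |N i j|) :=
          Finset.sum_le_sum fun i _ => abs_sub _ _
      _ ≤ ml1 M + ml1 N := by
          rw [Finset.sum_add_distrib]
          exact add_le_add (sum_abs_le_ml1 M j) (sum_abs_le_ml1 N j)

lemma ml1_mul_le (M : Matrix α β ℝ) (N : Matrix β γ ℝ) : ml1 (M * N) ≤ ml1 M * ml1 N :=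
  ml1_le (mul_nonneg (ml1_nonneg M) (ml1_nonneg N)) fun j =>
    calc ∑ i, |(M * N) i j| ≤ ∑ i, ∑ k, |M i k| * |N k j| := by
          gcongr with i
          simpa only [mul_apply, abs_mul] using
            Finset.abs_sum_le_sum_abs (fun k => M i k * N k j) Finset.univ
      _ = ∑ k, (∑ i, |M i k|) * |N k j| := by
          rw [Finset.sum_comm]; simp only [Finset.sum_mul]
      _ ≤ ∑ k, ml1 M * |N k j| :=
          Finset.sum_le_sum fun k _ => by gcongr; exact sum_abs_le_ml1 M k
      _ ≤ ml1 M * ml1 N := by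
          rw [← Finset.mul_sum]; gcongr; exacts [ml1_nonneg M, sum_abs_le_ml1 N j]

lemma ml1_submatrix_le (M : Matrix α β ℝ) (f : γ → β) : ml1 (M.submatrix id f) ≤ ml1 M :=
  ml1_le (ml1_nonneg M) fun j => sum_abs_le_ml1 M (f j)

end InducedL1Norm

section PadRows

variable {ι κ μ : Type*} [Fintype ι] [Fintype κ] [Fintype μ]

def padRows {R : Type*} [Zero R] (e : ι ≃ κ ⊕ μ) (H : Matrix κ ι R) : Matrix ι ι R :=
  (fromRows H 0).submatrix e id

lemma mul_padRows {α R : Type*} [Semiring R] (e : ι ≃ κ ⊕ μ) (A : Matrix α ι R)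
    (H : Matrix κ ι R) : A * padRows e H = A.submatrix id (e.symm ∘ Sum.inl) * H := by
  ext i v
  simp [padRows, mul_apply, ← e.symm.sum_comp, Fintype.sum_sum_type]

lemma sub_mul_padRows {α R : Type*} [Ring R] [DecidableEq κ] (e : ι ≃ κ ⊕ μ)
    {A N : Matrix α ι R} {W : Matrix α κ R} {H : Matrix κ ι R} (hA : A = W * H + N)
    (hH : H.submatrix id (e.symm ∘ Sum.inl) = 1) :
    A - A * padRows e H = N - N.submatrix id (e.symm ∘ Sum.inl) * H := by
  have hcols : A.submatrix id (e.symm ∘ Sum.inl) = W + N.submatrix id (e.symm ∘ Sum.inl) := by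
    rw [hA]
    change W * H.submatrix id _ + N.submatrix id _ = _
    rw [hH, Matrix.mul_one]
  rw [mul_padRows, hcols, hA, Matrix.add_mul]
  abel

lemma feas_padRows [DecidableEq ι] [DecidableEq κ] (e : ι ≃ κ ⊕ μ) {H : Matrix κ ι ℝ}
    (hH0 : ∀ k u, 0 ≤ H k u) (hH1 : ∀ u, ∑ k, H k u = 1)
    (hH : H.submatrix id (e.symm ∘ Sum.inl) = 1) : Feas (padRows e H) (Fintype.card κ) := by
  have hsel (k : κ) : H k (e.symm (Sum.inl k)) = 1 := by
    simpa using congrFun (congrFun hH k) k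
  have hle (k : κ) (u : ι) : H k u ≤ 1 :=
    hH1 u ▸ Finset.single_le_sum (fun k _ => hH0 k u) (Finset.mem_univ k)
  refine ⟨?_, fun u => ?_, fun u v => ?_, fun u v => ?_⟩
  · simp [trace, padRows, ← e.symm.sum_comp, Fintype.sum_sum_type, hsel]
  all_goals rcases hu : e u with k | k
  all_goals simp [padRows, hu, hle, hH0]
  -- remaining case: `X u v = H k v ≤ 1 = H k u` for `u = e⁻¹ (inl k)`
  rw [e.eq_symm_apply.mpr hu, hsel]
  exact hle k v

end PadRows

theorem optimal_value_le_two_eps_general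
    {d r m : ℕ} (W : Matrix (Fin d) (Fin r) ℝ) (Hbar : Matrix (Fin r) (Fin m) ℝ)
    (σ : Equiv.Perm (Fin r ⊕ Fin m))
    (N A V : Matrix (Fin d) (Fin r ⊕ Fin m) ℝ)
    (H : Matrix (Fin r) (Fin r ⊕ Fin m) ℝ) (ε : ℝ)
    (hHbar : ∀ i j, 0 ≤ Hbar i j)
    (hH : H = fun j u => Matrix.fromCols (1 : Matrix (Fin r) (Fin r) ℝ) Hbar j (σ u))
    (hV : V = W * H) (hA : A = V + N)
    (hHcol : ∀ u, l1 (fun j => H j u) = 1)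
    (hN : ml1 N ≤ ε)
    (θ : ℝ)
    (hθ : θ = sInf {c | ∃ X : Matrix (Fin r ⊕ Fin m) (Fin r ⊕ Fin m) ℝ,
      Feas X r ∧ c = ml1 (A - A * X)}) :
    θ ≤ 2 * ε := by
  have hH0 : ∀ j u, 0 ≤ H j u := by
    intro j u
    rcases hu : σ u with k | k <;> simp [hH, hu, one_apply, ite_nonneg, hHbar]
  have hH1 : ∀ u, ∑ j, H j u = 1 := fun u => by
    simpa only [l1, abs_of_nonneg (hH0 _ u)] using hHcol u
  have hsel : H.submatrix id (σ.symm ∘ Sum.inl) = 1 := by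
    ext j k
    change H j (σ.symm (Sum.inl k)) = _
    simp [hH]
  have hfeas : Feas (padRows σ H) r := by
    simpa using feas_padRows σ hH0 hH1 hsel
  have hHnorm : ml1 H ≤ 1 := ml1_le zero_le_one fun u => (hHcol u).le
  have hε : 0 ≤ ε := (ml1_nonneg N).trans hN
  calc θ ≤ ml1 (A - A * padRows σ H) := by
        rw [hθ]
        exact csInf_le ⟨0, by rintro _ ⟨X, -, rfl⟩; exact ml1_nonneg _⟩ ⟨_, hfeas, rfl⟩
    _ = ml1 (N - N.submatrix id (σ.symm ∘ Sum.inl) * H) := by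
        rw [sub_mul_padRows σ (by rw [hA, hV]) hsel]
    _ ≤ ml1 N + ml1 (N.submatrix id (σ.symm ∘ Sum.inl)) * ml1 H :=
        (ml1_sub_le _ _).trans (add_le_add le_rfl (ml1_mul_le _ _))
    _ ≤ ε + ε * 1 :=
        add_le_add hN (mul_le_mul ((ml1_submatrix_le N _).trans hN) hHnorm (ml1_nonneg H) hε)
    _ = 2 * ε := by ring

/-- The optimal value θ of problem P(A,r) satisfies θ ≤ 2ε. -/
theorem optimal_value_le_two_eps
    {d r m : ℕ} (W : Matrix (Fin d) (Fin r) ℝ) (Hbar : Matrix (Fin r) (Fin m) ℝ)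
    (σ : Equiv.Perm (Fin r ⊕ Fin m))
    (N A V : Matrix (Fin d) (Fin r ⊕ Fin m) ℝ)
    (H : Matrix (Fin r) (Fin r ⊕ Fin m) ℝ) (ε : ℝ)
    (hW : ∀ i j, 0 ≤ W i j) (hHbar : ∀ i j, 0 ≤ Hbar i j)
    (hH : H = fun j u => Matrix.fromCols (1 : Matrix (Fin r) (Fin r) ℝ) Hbar j (σ u))
    (hV : V = W * H) (hA : A = V + N)
    (hVcol : ∀ u, l1 (fun i => V i u) = 1)
    (hWcol : ∀ j, l1 (fun i => W i j) = 1)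
    (hHcol : ∀ u, l1 (fun j => H j u) = 1)
    (hε0 : 0 ≤ ε) (hε1 : ε < 1) (hN : ml1 N ≤ ε)
    (θ : ℝ)
    (hθ : θ = sInf {c | ∃ X : Matrix (Fin r ⊕ Fin m) (Fin r ⊕ Fin m) ℝ,
      Feas X r ∧ c = ml1 (A - A * X)}) :
    θ ≤ 2 * ε :=
  optimal_value_le_two_eps_general W Hbar σ N A V H ε hHbar hH hV hA hHcol hN θ hθ
end
end

section
/- Under Assumption 1, suppose μ satisfies ε ≤ μ, and let T_j = {u : ||a_u − w_j||_1 ≤ 2μ} be the j-th anchor. Then for every j ∈ R, max over u not in T_j of H(j,u) < 1 − μ/2. -/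
noncomputable section
open Matrix
open scoped Classical

/-! The column `a_u - w_j` equals `W (h_u - e_j) + n_u`. Multiplication by a matrix whose columns
have L1 norm at most one does not increase the L1 norm, and `‖h_u - e_j‖₁ ≤ 2 (1 - H(j,u))` for any
column `h_u` of unit L1 norm. Hence `‖a_u - w_j‖₁ ≤ 2 (1 - H(j,u)) + ε`, so `‖a_u - w_j‖₁ > 2μ ≥ μ + ε`
forces `H(j,u) < 1 - μ/2`. -/

section L1

variable {ι κ : Type*} [Fintype ι] [Fintype κ]

lemma l1_add_le (v w : ι → ℝ) : l1 (v + w) ≤ l1 v + l1 w := by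
  rw [l1, l1, l1, ← Finset.sum_add_distrib]
  exact Finset.sum_le_sum fun i _ => abs_add_le (v i) (w i)

lemma l1_col_le_ml1 (N : Matrix κ ι ℝ) (u : ι) : l1 (fun i => N i u) ≤ ml1 N :=
  le_csSup (Set.finite_range _).bddAbove ⟨u, rfl⟩

lemma l1_mulVec_le (W : Matrix κ ι ℝ) (hW : ∀ t, l1 (fun i => W i t) ≤ 1) (x : ι → ℝ) :
    l1 (W *ᵥ x) ≤ l1 x := calc
  l1 (W *ᵥ x) ≤ ∑ i, ∑ t, |W i t| * |x t| :=
    Finset.sum_le_sum fun i _ => (Finset.abs_sum_le_sum_abs _ _).trans_eq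
      (Finset.sum_congr rfl fun t _ => abs_mul (W i t) (x t))
  _ = ∑ t, l1 (fun i => W i t) * |x t| := by
    rw [Finset.sum_comm]
    exact Finset.sum_congr rfl fun t _ => (Finset.sum_mul _ _ _).symm
  _ ≤ l1 x := Finset.sum_le_sum fun t _ => mul_le_of_le_one_left (abs_nonneg _) (hW t)

lemma l1_sub_single_le [DecidableEq ι] (x : ι → ℝ) (hx : l1 x = 1) (j : ι) :
    l1 (x - Pi.single j 1) ≤ 2 * (1 - x j) := by
  have hsplit : l1 (x - Pi.single j 1) = |x j - 1| + ∑ t ∈ Finset.univ.erase j, |x t| := by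
    rw [l1, ← Finset.add_sum_erase _ _ (Finset.mem_univ j)]
    congr 1
    · simp
    · exact Finset.sum_congr rfl fun t ht => by simp [Finset.ne_of_mem_erase ht]
  rw [l1, ← Finset.add_sum_erase _ _ (Finset.mem_univ j)] at hx
  have hrest : 0 ≤ ∑ t ∈ Finset.univ.erase j, |x t| := Finset.sum_nonneg fun t _ => abs_nonneg _
  have hxj : |x j - 1| = 1 - x j := by
    rw [abs_sub_comm, abs_of_nonneg]
    linarith [le_abs_self (x j)]
  rw [hsplit, hxj]
  linarith [le_abs_self (x j)]

end L1

theorem H_outside_anchor_bound_general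
    {d r m : ℕ} (W : Matrix (Fin d) (Fin r) ℝ)
    (N A V : Matrix (Fin d) (Fin r ⊕ Fin m) ℝ)
    (H : Matrix (Fin r) (Fin r ⊕ Fin m) ℝ) (ε : ℝ)
    (hV : V = W * H) (hA : A = V + N)
    (hWcol : ∀ j, l1 (fun i => W i j) = 1)
    (hHcol : ∀ u, l1 (fun j => H j u) = 1)
    (hN : ml1 N ≤ ε)
    (μ : ℝ) (hεμ : ε ≤ μ) :
    ∀ (j : Fin r) (u : Fin r ⊕ Fin m),
      ¬ (l1 (fun k => A k u - W k j) ≤ 2 * μ) → H j u < 1 - μ / 2 := by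
  intro j u hfar
  have hcol : (fun k => A k u - W k j) =
      W *ᵥ ((fun t => H t u) - Pi.single j 1) + fun k => N k u := by
    ext k
    simp only [hA, hV, Matrix.add_apply, Matrix.mul_apply, Pi.add_apply, mulVec, dotProduct,
      Pi.sub_apply, Pi.single_apply, mul_sub, mul_ite, mul_one, mul_zero, Finset.sum_sub_distrib,
      Finset.sum_ite_eq', Finset.mem_univ, ↓reduceIte]
    ring
  have hclose : l1 (fun k => A k u - W k j) ≤ 2 * (1 - H j u) + ε := calc
    _ ≤ l1 (W *ᵥ ((fun t => H t u) - Pi.single j 1)) + l1 (fun k => N k u) :=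
      hcol ▸ l1_add_le _ _
    _ ≤ l1 ((fun t => H t u) - Pi.single j 1) + ε :=
      add_le_add (l1_mulVec_le W (fun t => (hWcol t).le) _) ((l1_col_le_ml1 N u).trans hN)
    _ ≤ 2 * (1 - H j u) + ε := by
      gcongr
      exact l1_sub_single_le _ (hHcol u) j
  linarith [not_le.mp hfar]

/-- For u outside the anchor T_j (with parameter μ ≥ ε), H(j,u) < 1 − μ/2. -/
theorem H_outside_anchor_bound
    {d r m : ℕ} (W : Matrix (Fin d) (Fin r) ℝ) (Hbar : Matrix (Fin r) (Fin m) ℝ)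
    (σ : Equiv.Perm (Fin r ⊕ Fin m))
    (N A V : Matrix (Fin d) (Fin r ⊕ Fin m) ℝ)
    (H : Matrix (Fin r) (Fin r ⊕ Fin m) ℝ) (ε : ℝ)
    (hW : ∀ i j, 0 ≤ W i j) (hHbar : ∀ i j, 0 ≤ Hbar i j)
    (hH : H = fun j u => Matrix.fromCols (1 : Matrix (Fin r) (Fin r) ℝ) Hbar j (σ u))
    (hV : V = W * H) (hA : A = V + N)
    (hVcol : ∀ u, l1 (fun i => V i u) = 1)
    (hWcol : ∀ j, l1 (fun i => W i j) = 1)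
    (hHcol : ∀ u, l1 (fun j => H j u) = 1)
    (hε0 : 0 ≤ ε) (hε1 : ε < 1) (hN : ml1 N ≤ ε)
    (μ : ℝ) (hεμ : ε ≤ μ) :
    ∀ (j : Fin r) (u : Fin r ⊕ Fin m),
      ¬ (l1 (fun k => A k u - W k j) ≤ 2 * μ) → H j u < 1 - μ / 2 :=
  H_outside_anchor_bound_general W N A V H ε hV hA hWcol hHcol hN μ hεμ
end
end
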